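/- arXiv:2011.04150 — 5 statements merged into one kernel-verified Lean document; each statement's English description precedes it below -/
import Mathlib

section
/- If f : X → Z is a finite branched covering, then the set of branch points B_f = {x ∈ X : deg(f;x) > 1} is nowhere dense in X. -/
open Set Topology

noncomputable section

/-- The degree of a map: the supremum of cardinalities of fibers. -/
def mapDeg {X Z : Type*} (f : X → Z) : ℕ∞ :=
  ⨆ z : Z, (f ⁻¹' {z}).encard

/-- The local degree of `f` at `x`: the infimum over neighborhoods `U` of `x` of
the supremum over `z ∈ f(U)` of `#(f⁻¹(z) ∩ U)`. -/
def locDeg {X Z : Type*} [TopologicalSpace X] (f : X → Z) (x : X) : ℕ∞ :=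
  ⨅ U ∈ nhds x, ⨆ z ∈ f '' U, (f ⁻¹' {z} ∩ U).encard

/-- `f : X → Z` is a finite branched covering: a finite-to-one continuous map of
finite degree such that (i) over every point the local degrees sum to the global
degree, and (ii) local degrees are locally stable: every `x₀` has compact
neighborhoods `U` of `x₀` and `V` of `f x₀` such that for every `z ∈ V` the local
degrees over `z` inside `U` sum to `deg(f; x₀)`. -/
structure IsFBC {X Z : Type*} [TopologicalSpace X] [TopologicalSpace Z]
    (f : X → Z) : Prop where
  continuous : Continuous f
  finite_fibers : ∀ z : Z, (f ⁻¹' {z}).Finite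
  deg_finite : mapDeg f ≠ ⊤
  deg_sum : ∀ z : Z, ∑ x ∈ (finite_fibers z).toFinset, locDeg f x = mapDeg f
  locDeg_stable : ∀ x₀ : X, ∃ U ∈ nhds x₀, ∃ V ∈ nhds (f x₀),
    IsCompact U ∧ IsCompact V ∧ ∀ z ∈ V,
      ∑ x ∈ ((finite_fibers z).inter_of_left U).toFinset, locDeg f x = locDeg f x₀

/-!
Upper semicontinuity of the local degree makes the branch set closed, so it suffices that it has
empty interior. At a point `x₀` minimising the local degree over that interior, local stability
bounds the sum of the local degrees of two distinct nearby points of a common fibre by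
`deg(f; x₀)`, while minimality bounds it below by `2 deg(f; x₀)`. Since local degrees are finite
and at least `1`, `f` must be injective near `x₀`, forcing `deg(f; x₀) ≤ 1`.
-/

section locDeg

variable {X Z : Type*} [TopologicalSpace X] {f : X → Z}

lemma one_le_locDeg (x : X) : 1 ≤ locDeg f x := by
  refine le_iInf₂ fun U hU => ?_
  refine le_iSup₂_of_le (f x) (mem_image_of_mem f (mem_of_mem_nhds hU)) ?_
  exact one_le_encard_iff_nonempty.mpr ⟨x, rfl, mem_of_mem_nhds hU⟩

lemma locDeg_le_one_of_injOn {x : X} {N : Set X} (hN : N ∈ 𝓝 x) (hinj : InjOn f N) :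
    locDeg f x ≤ 1 := by
  refine iInf₂_le_of_le N hN (iSup₂_le fun z _ => ?_)
  rw [encard_le_one_iff]
  rintro a b ⟨ha, haN⟩ ⟨hb, hbN⟩
  exact hinj haN hbN (ha.trans hb.symm)

end locDeg

namespace IsFBC

variable {X Z : Type*} [TopologicalSpace X] [TopologicalSpace Z] {f : X → Z}

lemma locDeg_le_mapDeg (hf : IsFBC f) (x : X) : locDeg f x ≤ mapDeg f :=
  hf.deg_sum (f x) ▸ Finset.single_le_sum (f := locDeg f) (fun _ _ => zero_le)
    ((hf.finite_fibers (f x)).mem_toFinset.mpr rfl)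

lemma locDeg_ne_top (hf : IsFBC f) (x : X) : locDeg f x ≠ ⊤ :=
  ne_top_of_le_ne_top hf.deg_finite (hf.locDeg_le_mapDeg x)

lemma exists_nhds_sum_locDeg_le (hf : IsFBC f) (x₀ : X) :
    ∃ N ∈ 𝓝 x₀, ∀ (z : Z) (s : Finset X), (∀ w ∈ s, w ∈ N ∧ f w = z) →
      ∑ w ∈ s, locDeg f w ≤ locDeg f x₀ := by
  obtain ⟨U, hU, V, hV, -, -, hstab⟩ := hf.locDeg_stable x₀
  refine ⟨U ∩ f ⁻¹' V, Filter.inter_mem hU (hf.continuous.continuousAt hV), fun z s hs => ?_⟩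
  obtain rfl | ⟨w, hw⟩ := s.eq_empty_or_nonempty
  · simp
  obtain ⟨⟨-, hwV⟩, rfl⟩ := hs w hw
  rw [← hstab (f w) hwV]
  refine Finset.sum_le_sum_of_subset fun v hv => ?_
  obtain ⟨⟨hvU, -⟩, hvz⟩ := hs v hv
  exact ((hf.finite_fibers _).inter_of_left U).mem_toFinset.mpr ⟨hvz, hvU⟩

lemma upperSemicontinuous_locDeg (hf : IsFBC f) : UpperSemicontinuous (locDeg f) := by
  intro x₀ y hy
  obtain ⟨N, hN, hsum⟩ := hf.exists_nhds_sum_locDeg_le x₀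
  filter_upwards [hN] with x hx
  simpa using (hsum (f x) {x} (by simpa using hx)).trans_lt hy

lemma isClosed_setOf_one_lt_locDeg (hf : IsFBC f) : IsClosed {x : X | 1 < locDeg f x} := by
  have hbranch : {x : X | 1 < locDeg f x} = locDeg f ⁻¹' Ici 2 := by
    ext x
    exact (ENat.add_one_le_iff ENat.one_ne_top).symm
  exact hbranch ▸ hf.upperSemicontinuous_locDeg.isClosed_preimage 2

lemma locDeg_le_one_of_isLocalMin {x₀ : X} (hf : IsFBC f) (hmin : IsLocalMin (locDeg f) x₀) :
    locDeg f x₀ ≤ 1 := by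
  classical
  obtain ⟨N, hN, hsum⟩ := hf.exists_nhds_sum_locDeg_le x₀
  refine locDeg_le_one_of_injOn (Filter.inter_mem hN hmin) ?_
  rintro w₁ ⟨hw₁N, hw₁⟩ w₂ ⟨hw₂N, hw₂⟩ hfw
  by_contra hne
  have hpair : locDeg f x₀ + locDeg f x₀ ≤ locDeg f x₀ :=
    calc locDeg f x₀ + locDeg f x₀ ≤ locDeg f w₁ + locDeg f w₂ := add_le_add hw₁ hw₂
      _ = ∑ w ∈ {w₁, w₂}, locDeg f w := (Finset.sum_pair hne).symm
      _ ≤ locDeg f x₀ := hsum (f w₁) _ (by simp [hw₁N, hw₂N, hfw])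
  have hpos := one_le_locDeg (f := f) x₀
  lift locDeg f x₀ to ℕ using hf.locDeg_ne_top x₀ with m
  norm_cast at hpair hpos
  omega

end IsFBC

theorem fbc_branch_nowhereDense_general {X Z : Type*} [TopologicalSpace X]
    [TopologicalSpace Z]
    (f : X → Z) (hf : IsFBC f) :
    IsNowhereDense {x : X | 1 < locDeg f x} := by
  rw [hf.isClosed_setOf_one_lt_locDeg.isNowhereDense_iff, ← not_nonempty_iff_eq_empty]
  rintro ⟨x, hx⟩
  obtain ⟨x₀, hx₀, hmin⟩ :=
    exists_minimalFor_of_wellFoundedLT (· ∈ interior {x : X | 1 < locDeg f x}) (locDeg f) ⟨x, hx⟩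
  have hlocMin : IsLocalMin (locDeg f) x₀ := by
    filter_upwards [isOpen_interior.mem_nhds hx₀] with y hy
    exact (le_total (locDeg f x₀) (locDeg f y)).elim id (hmin hy)
  have hbranch : 1 < locDeg f x₀ := interior_subset (s := {x : X | 1 < locDeg f x}) hx₀
  exact (hf.locDeg_le_one_of_isLocalMin hlocMin).not_gt hbranch

/-- The set of branch points of a finite branched covering is nowhere dense. -/
theorem fbc_branch_nowhereDense {X Z : Type*} [TopologicalSpace X]
    [TopologicalSpace Z]
    [CompactSpace X] [T2Space X] [ConnectedSpace X] [LocallyConnectedSpace X]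
    [CompactSpace Z] [T2Space Z] [ConnectedSpace Z] [LocallyConnectedSpace Z]
    (f : X → Z) (hf : IsFBC f) :
    IsNowhereDense {x : X | 1 < locDeg f x} :=
  fbc_branch_nowhereDense_general f hf
end
end

section
/- Let J be a compact, connected, locally connected, arcwise connected metric space. If J contains a simple closed curve C and a point x not on C, then J contains a topological embedding of the letter Y (the one-point union of three arcs, i.e., a triod). -/
open Metric Set Topology

noncomputable section

/-- Euclidean 3-space. -/
abbrev E3 : Type := EuclideanSpace ℝ (Fin 3)

/-- The endpoint `e_i` of the triod. -/
def triodPt (i : Fin 3) : E3 := EuclideanSpace.single i 1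

/-- The letter "Y": the union of the three unit segments `[0, e_i]` in `ℝ³`. -/
def Triod : Set E3 := ⋃ i : Fin 3, segment ℝ 0 (triodPt i)

/-- The leg `[0, e_i]` of the triod, as a subset of the triod. -/
def triodLeg (i : Fin 3) : Set Triod := {p | (p : E3) ∈ segment ℝ 0 (triodPt i)}

/-- The endpoint `e_i`, as a point of the triod. -/
def triodEnd (i : Fin 3) : Triod :=
  ⟨triodPt i, Set.mem_iUnion.2 ⟨i, right_mem_segment ℝ 0 (triodPt i)⟩⟩

/-- The center `o` of the triod. -/
def triodCenter : Triod :=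
  ⟨0, Set.mem_iUnion.2 ⟨0, left_mem_segment ℝ 0 (triodPt 0)⟩⟩

/-- An open set `U` of a metric space has a `c`-antenna if there is a topological
embedding `h` of the triod into `U` such that for every permutation `(i,j,k)` of
`(1,2,3)` the distance from `h(e_i)` to `h([0,e_j]) ∪ h([0,e_k])` is at least
`c * diam U`. -/
def HasAntenna {X : Type*} [MetricSpace X] (c : ℝ) (U : Set X) : Prop :=
  ∃ h : Triod → X, IsEmbedding h ∧ Set.range h ⊆ U ∧
    ∀ i j k : Fin 3, i ≠ j → j ≠ k → i ≠ k →
      c * Metric.diam U ≤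
        Metric.infDist (h (triodEnd i)) (h '' (triodLeg j ∪ triodLeg k))

/-- `X` is `c`-antenna-like if every ball of radius `r < diam X / 2` has a `c`-antenna. -/
def AntennaLike (X : Type*) [MetricSpace X] (c : ℝ) : Prop :=
  ∀ (x : X) (r : ℝ), 0 < r → r < Metric.diam (Set.univ : Set X) / 2 →
    HasAntenna c (Metric.ball x r)

/-! Cut an arc from `x` to the curve at its first point `p` on the curve. The arc of the curve
of angular width `2` centred at `p` meets the cut arc only at `p`; its two halves and the cut arc
are three arcs meeting only at their common endpoint `p`. Gluing them along the legs of `Y` gives a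
continuous injection of the compact triod into a Hausdorff space, hence an embedding. -/

open Function

theorem triodPt_apply (i j : Fin 3) : triodPt i j = if j = i then 1 else 0 := by
  simp [triodPt]

theorem apply_mem_Icc_and_eq_smul_of_mem_segment_triodPt {i : Fin 3} {q : E3}
    (hq : q ∈ segment ℝ 0 (triodPt i)) : q i ∈ Icc (0 : ℝ) 1 ∧ q = q i • triodPt i := by
  obtain ⟨t, ht, rfl⟩ := (segment_eq_image' ℝ 0 (triodPt i)).subset hq
  simp [triodPt_apply, ht]

theorem isCompact_segment {E : Type*} [AddCommGroup E] [Module ℝ E] [TopologicalSpace E]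
    [ContinuousAdd E] [ContinuousSMul ℝ E] (x y : E) : IsCompact (segment ℝ x y) := by
  rw [segment_eq_image]
  exact isCompact_Icc.image (by fun_prop)

theorem isCompact_triod : IsCompact Triod :=
  isCompact_iUnion fun _ => isCompact_segment _ _

theorem isClosed_triodLeg (i : Fin 3) : IsClosed (triodLeg i) :=
  (isCompact_segment _ _).isClosed.preimage continuous_subtype_val

theorem coe_eq_zero_of_mem_triodLeg {i j : Fin 3} (hij : i ≠ j) {q : Triod}
    (hi : q ∈ triodLeg i) (hj : q ∈ triodLeg j) : (q : E3) = 0 := by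
  obtain ⟨-, hqi⟩ := apply_mem_Icc_and_eq_smul_of_mem_segment_triodPt hi
  obtain ⟨-, hqj⟩ := apply_mem_Icc_and_eq_smul_of_mem_segment_triodPt hj
  have : (q : E3) i = 0 := by rw [hqj]; simp [triodPt_apply, hij]
  rw [hqi, this, zero_smul]

def triodLegOf (q : Triod) : Fin 3 := (mem_iUnion.1 q.2).choose

theorem mem_triodLeg_triodLegOf (q : Triod) : q ∈ triodLeg (triodLegOf q) :=
  (mem_iUnion.1 q.2).choose_spec

theorem iUnion_triodLeg : ⋃ i, triodLeg i = univ :=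
  eq_univ_of_forall fun q => mem_iUnion_of_mem _ (mem_triodLeg_triodLegOf q)

section TriodMap

variable {X : Type*} {f : Fin 3 → ℝ → X} {p : X}

def triodMap (f : Fin 3 → ℝ → X) (q : Triod) : X := f (triodLegOf q) ((q : E3) (triodLegOf q))

theorem triodMap_of_mem_triodLeg (h0 : ∀ i, f i 0 = p) {i : Fin 3} {q : Triod}
    (hq : q ∈ triodLeg i) : triodMap f q = f i ((q : E3) i) := by
  by_cases hi : triodLegOf q = i
  · rw [triodMap, hi]
  · have hq0 := coe_eq_zero_of_mem_triodLeg hi (mem_triodLeg_triodLegOf q) hq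
    simp only [triodMap, hq0, PiLp.zero_apply, h0]

theorem continuous_triodMap [TopologicalSpace X] (hf : ∀ i, Continuous (f i))
    (h0 : ∀ i, f i 0 = p) : Continuous (triodMap f) := by
  refine (locallyFinite_of_finite triodLeg).continuous iUnion_triodLeg isClosed_triodLeg
    fun i => ?_
  refine ContinuousOn.congr (f := fun q : Triod => f i ((q : E3) i)) ?_
    fun q hq => triodMap_of_mem_triodLeg h0 hq
  exact ((hf i).comp ((PiLp.continuous_apply 2 _ i).comp continuous_subtype_val)).continuousOn

theorem eq_zero_of_apply_eq_apply_of_ne (hinj : ∀ i, InjOn (f i) (Icc 0 1))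
    (h0 : ∀ i, f i 0 = p) (hdisj : Pairwise (Disjoint on fun i => f i '' Ioc 0 1))
    {i j : Fin 3} (hij : i ≠ j) {a b : ℝ} (ha : a ∈ Icc 0 1) (hb : b ∈ Icc 0 1)
    (hab : f i a = f j b) : a = 0 := by
  by_contra ha0
  have hb0 : b ≠ 0 := by
    rintro rfl
    exact ha0 (hinj i ha (left_mem_Icc.2 zero_le_one) (by rw [hab, h0, h0]))
  exact (hdisj hij).ne_of_mem (mem_image_of_mem _ ⟨ha.1.lt_of_ne' ha0, ha.2⟩)
    (mem_image_of_mem _ ⟨hb.1.lt_of_ne' hb0, hb.2⟩) hab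

theorem injective_triodMap (hinj : ∀ i, InjOn (f i) (Icc 0 1)) (h0 : ∀ i, f i 0 = p)
    (hdisj : Pairwise (Disjoint on fun i => f i '' Ioc 0 1)) : Injective (triodMap f) := by
  intro q q' hqq'
  obtain ⟨ha, hq⟩ :=
    apply_mem_Icc_and_eq_smul_of_mem_segment_triodPt (mem_triodLeg_triodLegOf q)
  obtain ⟨hb, hq'⟩ :=
    apply_mem_Icc_and_eq_smul_of_mem_segment_triodPt (mem_triodLeg_triodLegOf q')
  unfold triodMap at hqq'
  generalize triodLegOf q = i at *
  generalize triodLegOf q' = j at *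
  apply Subtype.ext
  rw [hq, hq']
  obtain rfl | hij := eq_or_ne i j
  · rw [hinj i ha hb hqq']
  · rw [eq_zero_of_apply_eq_apply_of_ne hinj h0 hdisj hij ha hb hqq',
      eq_zero_of_apply_eq_apply_of_ne hinj h0 hdisj hij.symm hb ha hqq'.symm, zero_smul, zero_smul]

theorem isEmbedding_triodMap [TopologicalSpace X] [T2Space X] (hf : ∀ i, Continuous (f i))
    (hinj : ∀ i, InjOn (f i) (Icc 0 1)) (h0 : ∀ i, f i 0 = p)
    (hdisj : Pairwise (Disjoint on fun i => f i '' Ioc 0 1)) : IsEmbedding (triodMap f) :=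
  have : CompactSpace Triod := isCompact_iff_compactSpace.1 isCompact_triod
  ((continuous_triodMap hf h0).isClosedEmbedding (injective_triodMap hinj h0 hdisj)).isEmbedding

end TriodMap

theorem exists_isEmbedding_triod_of_arc_of_whisker {X : Type*} [TopologicalSpace X] [T2Space X]
    {α β : ℝ → X}
    (hα : Continuous α) (hβ : Continuous β) (hα_inj : InjOn α (Icc (-1) 1))
    (hβ_inj : InjOn β (Icc 0 1)) (hβ0 : β 0 = α 0)
    (hβα : Disjoint (β '' Ioc 0 1) (α '' Icc (-1) 1)) : ∃ h : Triod → X, IsEmbedding h := by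
  have hneg : MapsTo (fun t : ℝ => -t) (Icc 0 1) (Icc (-1) 1) :=
    fun t ht => ⟨by linarith [ht.2], by linarith [ht.1]⟩
  have hpos_sub : α '' Ioc 0 1 ⊆ α '' Icc (-1) 1 :=
    image_mono fun t ht => ⟨by linarith [ht.1], ht.2⟩
  have hneg_sub : (fun t => α (-t)) '' Ioc 0 1 ⊆ α '' Icc (-1) 1 := by
    rintro _ ⟨t, ht, rfl⟩
    exact mem_image_of_mem α (hneg (Ioc_subset_Icc_self ht))
  have hpos_neg_disjoint : Disjoint (α '' Ioc 0 1) ((fun t => α (-t)) '' Ioc 0 1) := by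
    rw [disjoint_left]
    rintro _ ⟨s, hs, rfl⟩ ⟨t, ht, hts⟩
    have := hα_inj (hneg (Ioc_subset_Icc_self ht)) (Icc_subset_Icc (by norm_num) le_rfl
      (Ioc_subset_Icc_self hs)) hts
    linarith [hs.1, ht.1]
  refine ⟨triodMap ![β, α, fun t => α (-t)], isEmbedding_triodMap (p := α 0) ?_ ?_ ?_ ?_⟩
  · intro i
    fin_cases i
    exacts [hβ, hα, hα.comp continuous_neg]
  · intro i
    fin_cases i
    exacts [hβ_inj, hα_inj.mono (Icc_subset_Icc (by norm_num) le_rfl),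
      hα_inj.comp neg_injective.injOn hneg]
  · intro i
    fin_cases i <;> simp [hβ0]
  · refine (pairwise_disjoint_on _).2 fun i j hij => ?_
    fin_cases i <;> fin_cases j <;> try exact absurd hij (by decide)
    exacts [hβα.mono_right hpos_sub, hβα.mono_right hneg_sub, hpos_neg_disjoint]

theorem exists_arc_meeting_closed_only_at_start {X : Type*} [TopologicalSpace X] {C : Set X}
    (hC : IsClosed C) {γ : unitInterval → X} (hγ : Continuous γ) (hγ_inj : Injective γ)
    (h0 : γ 0 ∉ C) (h1 : γ 1 ∈ C) :
    ∃ β : ℝ → X, Continuous β ∧ InjOn β (Icc 0 1) ∧ β 0 ∈ C ∧ Disjoint (β '' Ioc 0 1) C := by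
  have hg_inj : InjOn (IccExtend zero_le_one γ) (Icc 0 1) := fun s hs t ht hst => by
    rw [IccExtend_of_mem _ _ hs, IccExtend_of_mem _ _ ht] at hst
    exact congrArg Subtype.val (hγ_inj hst)
  set g := IccExtend zero_le_one γ
  set S := Icc 0 1 ∩ g ⁻¹' C
  have hS : sInf S ∈ S :=
    (isClosed_Icc.inter (hC.preimage hγ.Icc_extend')).csInf_mem
      ⟨1, right_mem_Icc.2 zero_le_one, by simpa [g] using h1⟩ ⟨0, fun t ht => ht.1.1⟩
  set t₀ := sInf S
  -- `t₀` is the first time `γ` meets `C`; the arc `β` runs `γ` backwards from there.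
  have ht₀ : t₀ ≠ 0 := fun h => h0 (by simpa [g, h] using hS.2)
  have hmaps : MapsTo (fun t => t₀ * (1 - t)) (Icc 0 1) (Icc 0 1) := fun t ht =>
    ⟨mul_nonneg hS.1.1 (by linarith [ht.2]),
      mul_le_one₀ hS.1.2 (by linarith [ht.2]) (by linarith [ht.1])⟩
  refine ⟨fun t => g (t₀ * (1 - t)), by fun_prop, ?_, by simpa using hS.2, ?_⟩
  · refine hg_inj.comp (fun s _ t _ hst => ?_) hmaps
    have := mul_left_cancel₀ ht₀ hst
    linarith
  · rw [disjoint_left]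
    rintro _ ⟨t, ht, rfl⟩ hC
    have : t₀ ≤ t₀ * (1 - t) :=
      csInf_le ⟨0, fun t ht => ht.1.1⟩ ⟨hmaps (Ioc_subset_Icc_self ht), hC⟩
    nlinarith [ht.1, lt_of_le_of_ne hS.1.1 ht₀.symm]

theorem triod_of_scc_and_point_general {J : Type*} [MetricSpace J]
    (harc : ∀ x y : J, x ≠ y → ∃ γ : unitInterval → J,
      IsEmbedding γ ∧ γ 0 = x ∧ γ 1 = y)
    (e : Circle → J) (he : IsEmbedding e) (x : J) (hx : x ∉ Set.range e) :
    ∃ h : Triod → J, IsEmbedding h := by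
  obtain ⟨γ, hγ, hγ0, hγ1⟩ := harc x (e 1) fun h => hx ⟨1, h.symm⟩
  obtain ⟨β, hβ, hβ_inj, ⟨z, hz⟩, hβe⟩ := exists_arc_meeting_closed_only_at_start
    (isCompact_range he.continuous).isClosed hγ.continuous hγ.injective (hγ0 ▸ hx)
    (hγ1 ▸ mem_range_self 1)
  have hα : Continuous fun θ : ℝ => e (Circle.exp θ * z) := by
    have := he.continuous
    fun_prop
  have hα_inj : InjOn (fun θ : ℝ => e (Circle.exp θ * z)) (Icc (-1) 1) :=
    he.injective.comp_injOn ((mul_left_injective z).comp_injOn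
      (Circle.exp_injOn_Icc (by linarith [Real.pi_gt_three])))
  exact exists_isEmbedding_triod_of_arc_of_whisker hα hβ hα_inj hβ_inj (by simp [hz])
    (hβe.mono_right ((image_subset_range _ _).trans (range_comp_subset_range _ e)))

/-- If a compact, connected, locally connected, arcwise connected metric space `J`
contains a simple closed curve (an embedded circle) missing some point `x ∈ J`,
then `J` contains a topological embedding of the triod "Y". -/
theorem triod_of_scc_and_point {J : Type*} [MetricSpace J] [CompactSpace J]
    [ConnectedSpace J] [LocallyConnectedSpace J]
    (harc : ∀ x y : J, x ≠ y → ∃ γ : unitInterval → J,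
      IsEmbedding γ ∧ γ 0 = x ∧ γ 1 = y)
    (e : Circle → J) (he : IsEmbedding e) (x : J) (hx : x ∉ Set.range e) :
    ∃ h : Triod → J, IsEmbedding h :=
  triod_of_scc_and_point_general harc e he x hx
end
end

section
/- If X is a compact connected metric space and X \ {x} has at least three connected components for some point x ∈ X, and X is arcwise connected, then X contains a topological embedding of the letter Y centered at x. -/
/-!
Choose arcs `γᵢ` from `x` to `yᵢ`. Each half-open arc `γᵢ((0,1])` is connected, contains `yᵢ`
and misses `x`, so it lies in the component of `yᵢ` in `X \ {x}`; these components are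
pairwise distinct, hence the three arcs meet only at `x`. Gluing them along the legs of the
triod gives a continuous injection of a compact space into a Hausdorff space, i.e. an
embedding.
-/

open Metric Set Topology

noncomputable section

open Function unitInterval

theorem exists_isClosedEmbedding_comp_eq_of_ker_eq {A B C : Type*} [TopologicalSpace A]
    [TopologicalSpace B] [TopologicalSpace C] [CompactSpace A] [T2Space B] [T2Space C]
    {q : A → B} {g : A → C} (hq : Continuous q) (hqs : Surjective q) (hg : Continuous g)
    (hker : ∀ a b, g a = g b ↔ q a = q b) :
    ∃ h : B → C, IsClosedEmbedding h ∧ h ∘ q = g := by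
  have := hqs.compactSpace hq
  have hhq : (g ∘ surjInv hqs) ∘ q = g :=
    funext fun a => (hker _ _).2 (rightInverse_surjInv hqs (q a))
  refine ⟨g ∘ surjInv hqs, Continuous.isClosedEmbedding ?_ ?_, hhq⟩
  · rw [(IsQuotientMap.of_surjective_continuous hqs hq).continuous_iff, hhq]
    exact hg
  · intro p p' hp
    obtain ⟨a, rfl⟩ := hqs p
    obtain ⟨b, rfl⟩ := hqs p'
    exact (hker a b).1 ((congrFun hhq a).symm.trans (hp.trans (congrFun hhq b)))

lemma smul_triodPt_mem (i : Fin 3) (t : I) : (t : ℝ) • triodPt i ∈ Triod :=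
  mem_iUnion.2 ⟨i, segment_eq_image' ℝ 0 (triodPt i) ▸ ⟨t, t.2, by simp⟩⟩

def triodParam (p : Fin 3 × I) : Triod := ⟨(p.2 : ℝ) • triodPt p.1, smul_triodPt_mem p.1 p.2⟩

lemma continuous_triodParam : Continuous triodParam := by
  refine Continuous.subtype_mk ?_ _
  fun_prop

lemma surjective_triodParam : Surjective triodParam := by
  rintro ⟨p, hp⟩
  obtain ⟨i, hi⟩ := mem_iUnion.1 hp
  rw [segment_eq_image'] at hi
  obtain ⟨t, ht, rfl⟩ := hi
  exact ⟨(i, ⟨t, ht⟩), by simp [triodParam]⟩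

lemma triodParam_zero (i : Fin 3) : triodParam (i, 0) = triodCenter := by
  simp [triodParam, triodCenter]

lemma triodParam_eq_triodParam_iff {i j : Fin 3} {s t : I} :
    triodParam (i, s) = triodParam (j, t) ↔ i = j ∧ s = t ∨ s = 0 ∧ t = 0 := by
  refine ⟨fun hst => ?_, ?_⟩
  · have hcoord (k : Fin 3) : (if k = i then (s : ℝ) else 0) = if k = j then (t : ℝ) else 0 := by
      simpa [triodParam, triodPt, PiLp.single_apply] using
        congrArg (fun p : Triod => (p : E3) k) hst
    by_cases hij : i = j
    · subst hij
      exact .inl ⟨rfl, Subtype.ext (by simpa using hcoord i)⟩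
    · exact .inr ⟨Subtype.ext (by simpa [hij] using hcoord i),
        Subtype.ext (by simpa [Ne.symm hij] using (hcoord j).symm)⟩
  · rintro (⟨rfl, rfl⟩ | ⟨rfl, rfl⟩)
    · rfl
    · rw [triodParam_zero, triodParam_zero]

theorem exists_isEmbedding_triod_of_arcs {X : Type*} [TopologicalSpace X] [T2Space X] {x : X}
    {γ : Fin 3 → I → X} (hcont : ∀ i, Continuous (γ i)) (hinj : ∀ i, Injective (γ i))
    (h0 : ∀ i, γ i 0 = x)
    (hdisj : ∀ i j, i ≠ j → ∀ s t, s ≠ 0 → t ≠ 0 → γ i s ≠ γ j t) :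
    ∃ h : Triod → X, IsEmbedding h ∧ h triodCenter = x := by
  have hker (a b : Fin 3 × I) : γ a.1 a.2 = γ b.1 b.2 ↔ triodParam a = triodParam b := by
    obtain ⟨i, s⟩ := a
    obtain ⟨j, t⟩ := b
    rw [triodParam_eq_triodParam_iff]
    refine ⟨fun hst => ?_, ?_⟩
    · by_cases hij : i = j
      · subst hij
        exact .inl ⟨rfl, hinj i hst⟩
      · by_cases hs : s = 0
        · exact .inr ⟨hs, hinj j (by rw [← hst, hs, h0, h0])⟩
        · by_cases ht : t = 0
          · exact .inr ⟨hinj i (by rw [hst, ht, h0, h0]), ht⟩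
          · exact absurd hst (hdisj i j hij s t hs ht)
    · rintro (⟨rfl, rfl⟩ | ⟨rfl, rfl⟩)
      · rfl
      · rw [h0, h0]
  obtain ⟨h, hemb, hh⟩ := exists_isClosedEmbedding_comp_eq_of_ker_eq continuous_triodParam
    surjective_triodParam (continuous_prod_of_discrete_left.2 hcont) hker
  exact ⟨h, hemb.isEmbedding, by
    rw [← triodParam_zero 0]
    exact (congrFun hh (0, 0)).trans (h0 0)⟩

theorem arc_mem_connectedComponentIn {X : Type*} [TopologicalSpace X] {γ : I → X}
    (hcont : Continuous γ) (hinj : Injective γ) {t : I} (ht : t ≠ 0) :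
    γ t ∈ connectedComponentIn {γ 0}ᶜ (γ 1) := by
  have hsub : γ '' Ioi 0 ⊆ connectedComponentIn {γ 0}ᶜ (γ 1) := by
    refine (isPreconnected_Ioi.image γ hcont.continuousOn).subset_connectedComponentIn
      ⟨1, mem_Ioi.2 zero_lt_one, rfl⟩ ?_
    rintro - ⟨s, hs, rfl⟩
    exact hinj.ne hs.ne'
  exact hsub ⟨t, pos_iff_ne_zero.2 ht, rfl⟩

theorem triod_of_three_components_general {X : Type*} [MetricSpace X]
    (harc : ∀ x y : X, x ≠ y → ∃ γ : unitInterval → X,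
      IsEmbedding γ ∧ γ 0 = x ∧ γ 1 = y)
    (x y₁ y₂ y₃ : X) (h₁ : y₁ ≠ x) (h₂ : y₂ ≠ x) (h₃ : y₃ ≠ x)
    (h₁₂ : connectedComponentIn {x}ᶜ y₁ ≠ connectedComponentIn {x}ᶜ y₂)
    (h₁₃ : connectedComponentIn {x}ᶜ y₁ ≠ connectedComponentIn {x}ᶜ y₃)
    (h₂₃ : connectedComponentIn {x}ᶜ y₂ ≠ connectedComponentIn {x}ᶜ y₃) :
    ∃ h : Triod → X, IsEmbedding h ∧ h triodCenter = x := by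
  set y : Fin 3 → X := ![y₁, y₂, y₃]
  have hy (i : Fin 3) : x ≠ y i := by fin_cases i; exacts [h₁.symm, h₂.symm, h₃.symm]
  have hC : Pairwise fun i j =>
      connectedComponentIn {x}ᶜ (y i) ≠ connectedComponentIn {x}ᶜ (y j) := by
    intro i j hij
    fin_cases i <;> fin_cases j <;> simp_all [y, eq_comm]
  choose γ hγ hγ0 hγ1 using fun i => harc x (y i) (hy i)
  refine exists_isEmbedding_triod_of_arcs (fun i => (hγ i).continuous) (fun i => (hγ i).injective)
    hγ0 fun i j hij s t hs ht hst => hC hij ?_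
  have hmem_i := arc_mem_connectedComponentIn (hγ i).continuous (hγ i).injective hs
  have hmem_j := arc_mem_connectedComponentIn (hγ j).continuous (hγ j).injective ht
  rw [hγ0, hγ1] at hmem_i hmem_j
  rw [connectedComponentIn_eq hmem_i, connectedComponentIn_eq hmem_j, hst]

/-- If `X` is a compact connected arcwise connected metric space and `X \ {x}` has
at least three connected components, then `X` contains an embedded triod centered
at `x`. -/
theorem triod_of_three_components {X : Type*} [MetricSpace X] [CompactSpace X]
    [ConnectedSpace X]
    (harc : ∀ x y : X, x ≠ y → ∃ γ : unitInterval → X,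
      IsEmbedding γ ∧ γ 0 = x ∧ γ 1 = y)
    (x y₁ y₂ y₃ : X) (h₁ : y₁ ≠ x) (h₂ : y₂ ≠ x) (h₃ : y₃ ≠ x)
    (h₁₂ : connectedComponentIn {x}ᶜ y₁ ≠ connectedComponentIn {x}ᶜ y₂)
    (h₁₃ : connectedComponentIn {x}ᶜ y₁ ≠ connectedComponentIn {x}ᶜ y₃)
    (h₂₃ : connectedComponentIn {x}ᶜ y₂ ≠ connectedComponentIn {x}ᶜ y₃) :
    ∃ h : Triod → X, IsEmbedding h ∧ h triodCenter = x :=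
  triod_of_three_components_general harc x y₁ y₂ y₃ h₁ h₂ h₃ h₁₂ h₁₃ h₂₃
end
end

section
/- Let f : [0,1] → [0,1] be a continuous open map, and let x ∈ (0,1) be a point at which f is not locally injective (a branch point). Then f(x) ∈ {0,1} and f attains a local maximum or local minimum at x. -/
/-!
By a topological Rolle theorem, a continuous map on an interval taking equal values at two points
has a local extremum strictly between them, and an open map into a densely ordered space can only
have a local maximum (minimum) at a point whose value is the top (bottom) of the codomain. At a
branch point `x` every neighbourhood contains two points with the same image, hence a point mapped
to `0` or `1`; since `f ⁻¹' {0, 1}` is closed, `f x ∈ {0, 1}`, and such a value is a global extremum.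
-/

open Filter Set Topology

theorem isClosed_setOf_isTop_or_isBot {Y : Type*} [Preorder Y] [TopologicalSpace Y]
    [ClosedIciTopology Y] [ClosedIicTopology Y] : IsClosed {y : Y | IsTop y ∨ IsBot y} := by
  simp only [ofPred_or, IsTop, IsBot, ofPred_forall]
  exact (isClosed_iInter fun _ => isClosed_Ici).union (isClosed_iInter fun _ => isClosed_Iic)

theorem exists_lt_apply_eq_of_not_injOn {α β : Type*} [LinearOrder α] {f : α → β} {s : Set α}
    (h : ¬ InjOn f s) :
    ∃ a ∈ s, ∃ b ∈ s, a < b ∧ f a = f b := by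
  simp only [InjOn, not_forall] at h
  obtain ⟨a, ha, b, hb, hfab, hne⟩ := h
  rcases lt_or_gt_of_ne hne with hab | hba
  exacts [⟨a, ha, b, hb, hab, hfab⟩, ⟨b, hb, a, ha, hba, hfab.symm⟩]

section LocalExtr

variable {X Y : Type*} [TopologicalSpace X]
  [LinearOrder Y] [DenselyOrdered Y] [TopologicalSpace Y] [OrderTopology Y] {f : X → Y} {c : X}

theorem IsLocalMax.isTop_of_isOpenMap (hf : IsOpenMap f) (h : IsLocalMax f c) : IsTop (f c) := by
  intro y
  by_contra! hy
  have : NeBot (𝓝[>] f c) := nhdsGT_neBot_of_exists_gt ⟨y, hy⟩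
  have hle : ∀ᶠ z in 𝓝[>] f c, z ≤ f c :=
    nhdsWithin_le_nhds (mem_of_superset (hf.image_mem_nhds h) (image_subset_iff.2 fun _ h => h))
  obtain ⟨z, hzle, hlt⟩ := (hle.and self_mem_nhdsWithin).exists
  exact not_lt_of_ge hzle hlt

theorem IsLocalMin.isBot_of_isOpenMap (hf : IsOpenMap f) (h : IsLocalMin f c) : IsBot (f c) :=
  IsLocalMax.isTop_of_isOpenMap (Y := Yᵒᵈ) hf h

theorem IsLocalExtr.isTop_or_isBot_of_isOpenMap (hf : IsOpenMap f) (h : IsLocalExtr f c) :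
    IsTop (f c) ∨ IsBot (f c) :=
  h.elim (fun h => .inr (h.isBot_of_isOpenMap hf)) (fun h => .inl (h.isTop_of_isOpenMap hf))

end LocalExtr

section BranchPoint

variable {X Y : Type*}
  [ConditionallyCompleteLinearOrder X] [DenselyOrdered X] [TopologicalSpace X] [OrderTopology X]
  [LinearOrder Y] [DenselyOrdered Y] [TopologicalSpace Y] [OrderTopology Y] {f : X → Y}

theorem IsOpenMap.exists_mem_Ioo_isTop_or_isBot (ho : IsOpenMap f) (hc : Continuous f) {a b : X}
    (hab : a < b) (hf : f a = f b) : ∃ c ∈ Ioo a b, IsTop (f c) ∨ IsBot (f c) :=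
  let ⟨c, hc, hext⟩ := exists_isLocalExtr_Ioo hab hc.continuousOn hf
  ⟨c, hc, hext.isTop_or_isBot_of_isOpenMap ho⟩

theorem IsOpenMap.isTop_or_isBot_of_not_injOn (ho : IsOpenMap f) (hc : Continuous f) {x : X}
    (hbr : ∀ U ∈ 𝓝 x, ¬ InjOn f U) : IsTop (f x) ∨ IsBot (f x) := by
  refine (isClosed_setOf_isTop_or_isBot.preimage hc).closure_subset
    (mem_closure_iff_nhds.2 fun t ht => ?_)
  obtain ⟨l, r, -, hlr, hlrt⟩ := exists_Icc_mem_subset_of_mem_nhds ht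
  obtain ⟨a, ha, b, hb, hab, hfab⟩ := exists_lt_apply_eq_of_not_injOn (hbr _ hlr)
  obtain ⟨c, hc, hcext⟩ := ho.exists_mem_Ioo_isTop_or_isBot hc hab hfab
  exact ⟨c, hlrt (Icc_subset_Icc ha.1 hb.2 (Ioo_subset_Icc_self hc)), hcext⟩

end BranchPoint

theorem branch_point_extremum_general (f : unitInterval → unitInterval)
    (hc : Continuous f) (ho : IsOpenMap f) (x : unitInterval)
    (hbr : ∀ U ∈ nhds x, ¬ Set.InjOn f U) :
    (f x = 0 ∨ f x = 1) ∧ (IsLocalMax f x ∨ IsLocalMin f x) := by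
  have hext := ho.isTop_or_isBot_of_not_injOn hc hbr
  refine ⟨hext.symm.imp isBot_iff_eq_bot.1 isTop_iff_eq_top.1, ?_⟩
  exact hext.imp (fun h => .of_forall fun y => h (f y)) (fun h => .of_forall fun y => h (f y))

/-- If `f` is a continuous open self-map of `[0,1]` and `x ∈ (0,1)` is a branch
point (i.e., `f` is injective on no neighborhood of `x`), then `f x ∈ {0,1}` and
`f` attains a local maximum or a local minimum at `x`. -/
theorem branch_point_extremum (f : unitInterval → unitInterval)
    (hc : Continuous f) (ho : IsOpenMap f) (x : unitInterval)
    (hx0 : 0 < (x : ℝ)) (hx1 : (x : ℝ) < 1)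
    (hbr : ∀ U ∈ nhds x, ¬ Set.InjOn f U) :
    (f x = 0 ∨ f x = 1) ∧ (IsLocalMax f x ∨ IsLocalMin f x) :=
  branch_point_extremum_general f hc ho x hbr
end

section
/- Having a c-antenna is a quasi-symmetric invariant up to a change of constant: if h : X → Z is an η-quasi-symmetric homeomorphism of compact connected metric spaces and X is c-antenna-like, then Z is c'-antenna-like for some c' ∈ (0,1) depending only on η and c. -/
open Metric Set Topology

noncomputable section

open NNReal

/-- A map `h : X → Z` between metric spaces is `η`-quasi-symmetric if for all
`x, y, z` with `x ≠ z` we have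
`d(h x, h y) / d(h x, h z) ≤ η (d(x,y) / d(x,z))`. -/
def IsQS {X Z : Type*} [MetricSpace X] [MetricSpace Z] (η : ℝ≥0 → ℝ≥0)
    (h : X → Z) : Prop :=
  ∀ x y z : X, x ≠ z →
    nndist (h x) (h y) / nndist (h x) (h z) ≤ η (nndist x y / nndist x z)

/-!
Pick `w` with `d(z₀, w) = r`, pull back to `x₀ = h⁻¹ z₀`, `x₁ = h⁻¹ w`, and take a `c`-antenna of
the ball `B(x₀, θ d(x₀, x₁))`, with `θ` so small that `η θ ≤ 1/4`. Quasi-symmetry at `x₀` puts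
its image inside `B(z₀, r/4)`. For an endpoint `p` and a point `q` of the opposite legs,
`d(p, q)` is comparable to `d(x₀, x₁)`, hence to `d(p, x₁)`; quasi-symmetry at `p` turns this
into `d(h p, h q) ≳ d(h p, w) ≥ 3r/4`.
-/

lemma Homeomorph.strictMono_nnreal (η : ℝ≥0 ≃ₜ ℝ≥0) : StrictMono η := by
  refine (η.continuous.strictMono_of_inj η.injective).resolve_right fun hanti => ?_
  obtain ⟨x, hx⟩ := η.surjective (η 0 + 1)
  have := hanti.antitone (zero_le : 0 ≤ x)
  rw [hx] at this
  exact (lt_add_one (η 0)).not_ge this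

lemma Homeomorph.map_zero_nnreal (η : ℝ≥0 ≃ₜ ℝ≥0) : η 0 = 0 := by
  obtain ⟨x, hx⟩ := η.surjective 0
  have := η.strictMono_nnreal.monotone (zero_le : 0 ≤ x)
  rw [hx] at this
  exact le_antisymm this zero_le

lemma Homeomorph.exists_pos_le_map_le_nnreal (η : ℝ≥0 ≃ₜ ℝ≥0) {ε : ℝ≥0} (hε : 0 < ε) :
    ∃ θ : ℝ≥0, 0 < θ ∧ θ ≤ ε ∧ η θ ≤ ε := by
  refine ⟨min (η.symm ε) ε, lt_min ?_ hε, min_le_right _ _, ?_⟩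
  · simpa [η.symm.map_zero_nnreal] using η.symm.strictMono_nnreal hε
  · simpa using η.strictMono_nnreal.monotone (min_le_left (η.symm ε) ε)

section Connected

variable {X : Type*} [MetricSpace X] [ConnectedSpace X]

lemma exists_dist_eq_of_lt_diam (x₀ : X) {r : ℝ} (hr0 : 0 ≤ r)
    (hr : r < diam (univ : Set X) / 2) : ∃ w, dist x₀ w = r := by
  obtain ⟨y, hy⟩ : ∃ y, r ≤ dist x₀ y := by
    by_contra! hfar
    have : diam (univ : Set X) ≤ 2 * r :=
      diam_le_of_forall_dist_le (by positivity) fun a _ b _ => by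
        linarith [dist_triangle_left a b x₀, hfar a, hfar b]
    linarith
  exact intermediate_value_univ x₀ y (continuous_const.dist continuous_id) ⟨by simpa, hy⟩

lemma half_le_diam_ball (x₀ : X) {s : ℝ} (hs0 : 0 < s)
    (hs : s < diam (univ : Set X) / 2) : s / 2 ≤ diam (ball x₀ s) := by
  obtain ⟨w, hw⟩ := exists_dist_eq_of_lt_diam x₀ (by positivity : 0 ≤ s / 2) (by linarith)
  have hw_mem : w ∈ ball x₀ s := by rw [mem_ball', hw]; linarith
  simpa [hw] using dist_le_diam_of_mem isBounded_ball (mem_ball_self hs0) hw_mem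

end Connected

theorem HasAntenna.image {X Z : Type*} [MetricSpace X] [MetricSpace Z] {c c' : ℝ}
    {U : Set X} {V : Set Z} (hU : HasAntenna c U) {f : X → Z} (hf : IsEmbedding f)
    (hUV : MapsTo f U V)
    (hsep : ∀ p ∈ U, ∀ q ∈ U, c * diam U ≤ dist p q → c' * diam V ≤ dist (f p) (f q)) :
    HasAntenna c' V := by
  obtain ⟨e, he, heU, hsepU⟩ := hU
  refine ⟨f ∘ e, hf.comp he, ?_, fun i j k hij hjk hik => ?_⟩
  · rintro _ ⟨t, rfl⟩
    exact hUV (heU ⟨t, rfl⟩)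
  have hcenter : triodCenter ∈ triodLeg j ∪ triodLeg k := Or.inl (left_mem_segment ℝ 0 _)
  rw [le_infDist (.image _ ⟨_, hcenter⟩)]
  rintro _ ⟨t, ht, rfl⟩
  refine hsep _ (heU ⟨_, rfl⟩) _ (heU ⟨t, rfl⟩) ?_
  exact (hsepU i j k hij hjk hik).trans (infDist_le_dist_of_mem ⟨t, ht, rfl⟩)

namespace IsQS

variable {X Z : Type*} [MetricSpace X] [MetricSpace Z] {η : ℝ≥0 → ℝ≥0} {h : X → Z}

theorem dist_le_mul (hqs : IsQS η h) (hη : Monotone η) (hh : Function.Injective h) {x y z : X}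
    (hxz : x ≠ z) {t : ℝ≥0} (hle : dist x y ≤ t * dist x z) :
    dist (h x) (h y) ≤ η t * dist (h x) (h z) := by
  have hratio : nndist x y / nndist x z ≤ t := by
    rw [div_le_iff₀ (pos_iff_ne_zero.2 (nndist_eq_zero.not.2 hxz)), ← NNReal.coe_le_coe]
    exact hle
  have hhxz : 0 < nndist (h x) (h z) := pos_iff_ne_zero.2 (nndist_eq_zero.not.2 (hh.ne hxz))
  have := (div_le_iff₀ hhxz).1 ((hqs x y z hxz).trans (hη hratio))
  exact_mod_cast this

theorem dist_le_div_four (hqs : IsQS η h) (hη : Monotone η) (hh : Function.Injective h)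
    {x₀ x₁ x : X} (hx : x₀ ≠ x₁) {θ : ℝ≥0} (hηθ : η θ ≤ 4⁻¹)
    (hxθ : dist x₀ x ≤ θ * dist x₀ x₁) : dist (h x₀) (h x) ≤ dist (h x₀) (h x₁) / 4 := by
  have hηθ' : (η θ : ℝ) ≤ 4⁻¹ := by exact_mod_cast hηθ
  nlinarith [hqs.dist_le_mul hη hh hx hxθ, dist_nonneg (x := h x₀) (y := h x₁)]

theorem hasAntenna_ball (hqs : IsQS η h) (hη : Monotone η) (hh : IsEmbedding h)
    {x₀ x₁ : X} (hx : x₀ ≠ x₁) {c : ℝ} (hc : 0 < c) {θ : ℝ≥0} (hθ1 : θ ≤ 1)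
    (hηθ : η θ ≤ 4⁻¹) (hU : HasAntenna c (ball x₀ (θ * dist x₀ x₁)))
    (hdiam : θ * dist x₀ x₁ / 2 ≤ diam (ball x₀ (θ * dist x₀ x₁))) :
    HasAntenna (4 * (η (4 / (c.toNNReal * θ)) + 1))⁻¹ (ball (h x₀) (dist (h x₀) (h x₁))) := by
  set D := dist x₀ x₁
  set R := dist (h x₀) (h x₁)
  set K := η (4 / (c.toNNReal * θ))
  have hD : 0 < D := dist_pos.2 hx
  have hθ1' : (θ : ℝ) ≤ 1 := hθ1
  have hnear : ∀ x ∈ ball x₀ (θ * D), dist (h x₀) (h x) ≤ R / 4 := fun x hxU =>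
    hqs.dist_le_div_four hη hh.injective hx hηθ (mem_ball'.1 hxU).le
  refine hU.image hh (fun x hxU => ?_) fun p hp q _ hpq => ?_
  · rw [mem_ball']
    linarith [hnear x hxU, dist_pos.2 (hh.injective.ne hx)]
  have hs : 0 < θ * D := pos_of_mem_ball hp
  have hθ : 0 < (θ : ℝ) := pos_of_mul_pos_left hs hD.le
  have hδ : c * (θ * D / 2) ≤ dist p q := (mul_le_mul_of_nonneg_left hdiam hc.le).trans hpq
  have hpq' : p ≠ q := dist_pos.1 (lt_of_lt_of_le (by positivity) hδ)
  have hfar : dist p x₁ ≤ (4 / (c.toNNReal * θ) : ℝ≥0) * dist p q := by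
    have : dist p x₁ ≤ 2 * D := by
      linarith [dist_triangle p x₀ x₁, mem_ball.1 hp, mul_le_of_le_one_left hD.le hθ1']
    calc dist p x₁ ≤ 2 * D := this
      _ = 4 / (c * θ) * (c * (θ * D / 2)) := by field_simp; ring
      _ ≤ _ := by
        push_cast [Real.coe_toNNReal _ hc.le]
        gcongr
  have hKR : dist (h p) (h x₁) ≤ K * dist (h p) (h q) := hqs.dist_le_mul hη hh.injective hpq' hfar
  have hR : 3 / 4 * R ≤ dist (h p) (h x₁) := by
    linarith [dist_triangle (h x₀) (h p) (h x₁), hnear p hp]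
  calc (4 * ((K : ℝ) + 1))⁻¹ * diam (ball (h x₀) R) ≤ (4 * ((K : ℝ) + 1))⁻¹ * (2 * R) := by
        gcongr; exact diam_ball dist_nonneg
    _ ≤ dist (h p) (h q) := by
        rw [inv_mul_le_iff₀ (by positivity)]
        nlinarith [dist_nonneg (x := h p) (y := h q)]

end IsQS

theorem antennaLike_qs_invariant_general {X Z : Type*} [MetricSpace X] [MetricSpace Z]
    [CompactSpace X] [ConnectedSpace X] [ConnectedSpace Z]
    (η : ℝ≥0 ≃ₜ ℝ≥0) (h : X ≃ₜ Z) (hqs : IsQS (⇑η) ⇑h)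
    (c : ℝ) (hc0 : 0 < c) (hX : AntennaLike X c) :
    ∃ c' : ℝ, 0 < c' ∧ c' < 1 ∧ AntennaLike Z c' := by
  obtain ⟨θ, hθ0, hθ4, hηθ⟩ := η.exists_pos_le_map_le_nnreal (ε := 4⁻¹) (by norm_num)
  set K : ℝ≥0 := η (4 / (c.toNNReal * θ))
  refine ⟨(4 * (K + 1))⁻¹, by positivity, ?_, fun z₀ r hr hrZ => ?_⟩
  · rw [inv_lt_one₀ (by positivity)]
    linarith [K.coe_nonneg]
  obtain ⟨w, rfl⟩ := exists_dist_eq_of_lt_diam z₀ hr.le hrZ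
  have hx : h.symm z₀ ≠ h.symm w := h.symm.injective.ne (dist_pos.1 hr)
  have hs : θ * dist (h.symm z₀) (h.symm w) < diam (univ : Set X) / 2 := by
    have hD := dist_le_diam_of_mem isCompact_univ.isBounded (mem_univ (h.symm z₀))
      (mem_univ (h.symm w))
    have hθ4' : (θ : ℝ) ≤ 4⁻¹ := hθ4
    nlinarith [dist_pos.2 hx]
  have hs0 : 0 < θ * dist (h.symm z₀) (h.symm w) := mul_pos hθ0 (dist_pos.2 hx)
  simpa using hqs.hasAntenna_ball η.strictMono_nnreal.monotone h.isEmbedding hx hc0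
    (hθ4.trans (inv_le_one_of_one_le₀ (by norm_num))) hηθ (hX _ _ hs0 hs)
    (half_le_diam_ball _ hs0 hs)

/-- Being antenna-like is a quasi-symmetric invariant up to a change of constant:
if `h : X ≃ₜ Z` is an `η`-quasi-symmetric homeomorphism of compact connected
metric spaces and `X` is `c`-antenna-like, then `Z` is `c'`-antenna-like for some
`c' ∈ (0,1)`. -/
theorem antennaLike_qs_invariant {X Z : Type*} [MetricSpace X] [MetricSpace Z]
    [CompactSpace X] [ConnectedSpace X] [CompactSpace Z] [ConnectedSpace Z]
    (η : ℝ≥0 ≃ₜ ℝ≥0) (h : X ≃ₜ Z) (hqs : IsQS (⇑η) ⇑h)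
    (c : ℝ) (hc0 : 0 < c) (hc1 : c < 1) (hX : AntennaLike X c) :
    ∃ c' : ℝ, 0 < c' ∧ c' < 1 ∧ AntennaLike Z c' :=
  antennaLike_qs_invariant_general η h hqs c hc0 hX
end
end
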